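/- Let G be a locally compact group, Λ ⊆ G an approximate lattice, N ⊴ G a closed normal subgroup, and p : G → G/N the quotient. If p(Λ) is an approximate lattice in G/N, then p(Λ) is uniformly discrete; conversely if p(Λ) is uniformly discrete then p(Λ²) is a uniformly discrete approximate subgroup of G/N. -/

import Mathlib

open Pointwise MeasureTheory

def IsApproxSubgroup {G : Type*} [Group G] (Λ : Set G) : Prop :=
  (1 : G) ∈ Λ ∧ Λ⁻¹ = Λ ∧ ∃ F : Set G, F.Finite ∧ Λ * Λ ⊆ F * Λ

def UniformlyDiscrete {G : Type*} [Group G] [TopologicalSpace G] (Λ : Set G) : Prop :=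
  ∃ U ∈ nhds (1 : G), Λ⁻¹ * Λ ∩ U = {1}

def IsApproxLattice {G : Type*} [Group G] [TopologicalSpace G] [MeasurableSpace G]
    (μ : Measure G) (Λ : Set G) : Prop :=
  IsApproxSubgroup Λ ∧ UniformlyDiscrete Λ ∧
    ∃ F : Set G, MeasurableSet F ∧ μ F < ⊤ ∧ Λ * F = Set.univ

/-!
If `Λ² ⊆ FΛ` then `(Λ²)⁻¹Λ² = Λ⁴ ⊆ F³Λ`, and this survives any homomorphism `p`. Hence
`p(Λ²)⁻¹p(Λ²)` is covered by finitely many translates of `p(Λ)`. If `p(Λ)` is uniformly discrete,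
each translate meets a small identity neighbourhood in at most one point, so `p(Λ²)⁻¹p(Λ²)` meets
it in a finite set, and in a T1 group the identity is then isolated in it.
-/

open Filter Topology

lemma Set.mul_mul_mul_subset_of_mul_subset {M : Type*} [Monoid M] {Λ F : Set M}
    (hF : Λ * Λ ⊆ F * Λ) : Λ * Λ * (Λ * Λ) ⊆ F * F * F * Λ :=
  calc Λ * Λ * (Λ * Λ) = Λ * Λ * Λ * Λ := (mul_assoc _ _ _).symm
    _ ⊆ F * Λ * Λ * Λ := by gcongr
    _ = F * (Λ * Λ) * Λ := by simp only [mul_assoc]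
    _ ⊆ F * (F * Λ) * Λ := by gcongr
    _ = F * F * (Λ * Λ) := by simp only [mul_assoc]
    _ ⊆ F * F * (F * Λ) := by gcongr
    _ = F * F * F * Λ := by simp only [mul_assoc]

namespace IsApproxSubgroup

variable {G H : Type*} [Group G] [Group H] {Λ : Set G}

lemma mul_self_inv (hΛ : IsApproxSubgroup Λ) : (Λ * Λ)⁻¹ = Λ * Λ := by
  rw [mul_inv_rev, hΛ.2.1]

lemma exists_finite_mul_self_mul_mul_self_subset (hΛ : IsApproxSubgroup Λ) :
    ∃ E : Set G, E.Finite ∧ Λ * Λ * (Λ * Λ) ⊆ E * Λ := by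
  obtain ⟨-, -, F, hF, hΛF⟩ := hΛ
  exact ⟨F * F * F, (hF.mul hF).mul hF, Set.mul_mul_mul_subset_of_mul_subset hΛF⟩

lemma mul_self (hΛ : IsApproxSubgroup Λ) : IsApproxSubgroup (Λ * Λ) := by
  obtain ⟨E, hE, hΛE⟩ := hΛ.exists_finite_mul_self_mul_mul_self_subset
  refine ⟨by simpa using Set.mul_mem_mul hΛ.1 hΛ.1, hΛ.mul_self_inv, E, hE, ?_⟩
  exact hΛE.trans (Set.mul_subset_mul_left (Set.subset_mul_left Λ hΛ.1))

lemma image (hΛ : IsApproxSubgroup Λ) (f : G →* H) : IsApproxSubgroup (f '' Λ) := by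
  obtain ⟨h1, hinv, F, hF, hΛF⟩ := hΛ
  refine ⟨⟨1, h1, map_one f⟩, by rw [← Set.image_inv, hinv], f '' F, hF.image f, ?_⟩
  rw [← Set.image_mul, ← Set.image_mul]
  exact Set.image_mono hΛF

end IsApproxSubgroup

section UniformlyDiscrete

variable {Q : Type*} [Group Q] [TopologicalSpace Q] [IsTopologicalGroup Q]

lemma UniformlyDiscrete.exists_mem_nhds_finite_mul_inter_finite {X E : Set Q}
    (hX : UniformlyDiscrete X) (hE : E.Finite) : ∃ V ∈ 𝓝 (1 : Q), (E * X ∩ V).Finite := by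
  obtain ⟨U, hU, hXU⟩ := hX
  obtain ⟨V, hV, -, hVinv, hVU⟩ := exists_closed_nhds_one_inv_eq_mul_subset hU
  have htranslate : ∀ a, ((a * ·) '' X ∩ V).Subsingleton := by
    rintro a _ ⟨⟨x₁, hx₁, rfl⟩, hy₁⟩ _ ⟨⟨x₂, hx₂, rfl⟩, hy₂⟩
    have hx : x₁⁻¹ * x₂ ∈ X⁻¹ * X ∩ U := by
      refine ⟨Set.mul_mem_mul (Set.inv_mem_inv.mpr hx₁) hx₂, hVU ?_⟩
      have := Set.mul_mem_mul (Set.inv_mem_inv.mpr hy₁) hy₂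
      rwa [hVinv, mul_inv_rev, mul_assoc, inv_mul_cancel_left] at this
    rw [hXU, Set.mem_singleton_iff, inv_mul_eq_one] at hx
    rw [hx]
  refine ⟨V, hV, ?_⟩
  rw [← Set.iUnion_mul_left_image, Set.iUnion₂_inter]
  exact hE.biUnion fun a _ => (htranslate a).finite

lemma UniformlyDiscrete.of_inv_mul_subset_finite_mul [T1Space Q] {X Z E : Set Q}
    (hX : UniformlyDiscrete X) (hE : E.Finite) (hZ : Z.Nonempty) (hZX : Z⁻¹ * Z ⊆ E * X) :
    UniformlyDiscrete Z := by
  obtain ⟨V, hV, hfin⟩ := hX.exists_mem_nhds_finite_mul_inter_finite hE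
  obtain ⟨z, hz⟩ := hZ
  have h1 : (1 : Q) ∈ Z⁻¹ * Z ∩ V :=
    ⟨inv_mul_cancel z ▸ Set.mul_mem_mul (Set.inv_mem_inv.mpr hz) hz, mem_of_mem_nhds hV⟩
  obtain ⟨W, hW, hWZ⟩ := nhds_inter_eq_singleton_of_mem_discrete
    (hfin.subset (Set.inter_subset_inter_left V hZX)).isDiscrete h1
  refine ⟨W ∩ V, inter_mem hW hV, ?_⟩
  rw [← hWZ, Set.inter_comm W, Set.inter_comm W, Set.inter_assoc]

end UniformlyDiscrete

lemma IsApproxSubgroup.uniformlyDiscrete_image_mul_self {G Q : Type*} [Group G] [Group Q]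
    [TopologicalSpace Q] [IsTopologicalGroup Q] [T1Space Q] {Λ : Set G}
    (hΛ : IsApproxSubgroup Λ) (f : G →* Q) (hfΛ : UniformlyDiscrete (f '' Λ)) :
    UniformlyDiscrete (f '' (Λ * Λ)) := by
  obtain ⟨E, hE, hΛE⟩ := hΛ.exists_finite_mul_self_mul_mul_self_subset
  refine hfΛ.of_inv_mul_subset_finite_mul (hE.image f)
    ((Set.nonempty_of_mem (Set.mul_mem_mul hΛ.1 hΛ.1)).image f) ?_
  rw [← Set.image_inv, hΛ.mul_self_inv, ← Set.image_mul, ← Set.image_mul]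
  exact Set.image_mono hΛE

theorem stmt19_general {G : Type*} [Group G] [TopologicalSpace G] [IsTopologicalGroup G]
    [MeasurableSpace G]
    (μG : Measure G)
    (N : Subgroup G) [N.Normal] (hN : IsClosed (N : Set G))
    [MeasurableSpace (G ⧸ N)]
    (μQ : Measure (G ⧸ N))
    (Λ : Set G) (hΛ : IsApproxLattice μG Λ) :
    (IsApproxLattice μQ ((QuotientGroup.mk : G → G ⧸ N) '' Λ) →
      UniformlyDiscrete ((QuotientGroup.mk : G → G ⧸ N) '' Λ)) ∧
    (UniformlyDiscrete ((QuotientGroup.mk : G → G ⧸ N) '' Λ) →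
      IsApproxSubgroup ((QuotientGroup.mk : G → G ⧸ N) '' (Λ * Λ)) ∧
        UniformlyDiscrete ((QuotientGroup.mk : G → G ⧸ N) '' (Λ * Λ))) := by
  have : T3Space (G ⧸ N) := QuotientGroup.instT3Space (hN := hN)
  exact ⟨fun h => h.2.1, fun h => ⟨hΛ.1.mul_self.image (QuotientGroup.mk' N),
    hΛ.1.uniformlyDiscrete_image_mul_self (QuotientGroup.mk' N) h⟩⟩

theorem stmt19 {G : Type*} [Group G] [TopologicalSpace G] [IsTopologicalGroup G]
    [LocallyCompactSpace G] [MeasurableSpace G] [BorelSpace G]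
    (μG : Measure G) [μG.IsHaarMeasure]
    (N : Subgroup G) [N.Normal] (hN : IsClosed (N : Set G))
    [MeasurableSpace (G ⧸ N)] [BorelSpace (G ⧸ N)]
    (μQ : Measure (G ⧸ N)) [μQ.IsHaarMeasure]
    (Λ : Set G) (hΛ : IsApproxLattice μG Λ) :
    (IsApproxLattice μQ ((QuotientGroup.mk : G → G ⧸ N) '' Λ) →
      UniformlyDiscrete ((QuotientGroup.mk : G → G ⧸ N) '' Λ)) ∧
    (UniformlyDiscrete ((QuotientGroup.mk : G → G ⧸ N) '' Λ) →
      IsApproxSubgroup ((QuotientGroup.mk : G → G ⧸ N) '' (Λ * Λ)) ∧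
        UniformlyDiscrete ((QuotientGroup.mk : G → G ⧸ N) '' (Λ * Λ))) :=
  stmt19_general μG N hN μQ Λ hΛ
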